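/- Let T be a tree and S = (S_A, S_B, S_C) a labeling of T such that (T, S) belongs to the family 𝒯. Then every vertex in S_B has degree two in T and both of its neighbors belong to S_A. -/

import Mathlib

open SimpleGraph

/-- A dominating set: every vertex outside `S` has a neighbor in `S`. -/
def IsDominatingSet {V : Type} (G : SimpleGraph V) (S : Set V) : Prop :=
  ∀ v ∉ S, ∃ u ∈ S, G.Adj u v

/-- A total dominating set: every vertex has a neighbor in `S`. -/
def IsTotalDominatingSet {V : Type} (G : SimpleGraph V) (S : Set V) : Prop :=
  ∀ v : V, ∃ u ∈ S, G.Adj u v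

/-- `u` is within distance two of `v`. -/
def WithinTwo {V : Type} (G : SimpleGraph V) (u v : V) : Prop :=
  G.Adj u v ∨ ∃ w, G.Adj u w ∧ G.Adj w v

/-- A semitotal dominating set: a dominating set in which every vertex is within
distance two of another vertex of the set. -/
def IsSemitotalDominatingSet {V : Type} (G : SimpleGraph V) (S : Set V) : Prop :=
  IsDominatingSet G S ∧ ∀ v ∈ S, ∃ u ∈ S, u ≠ v ∧ WithinTwo G u v

/-- The domination number `γ(G)`. -/
noncomputable def dominationNumber {V : Type} (G : SimpleGraph V) : ℕ :=
  sInf {n | ∃ S : Set V, IsDominatingSet G S ∧ S.ncard = n}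

/-- The total domination number `γ_t(G)`. -/
noncomputable def totalDominationNumber {V : Type} (G : SimpleGraph V) : ℕ :=
  sInf {n | ∃ S : Set V, IsTotalDominatingSet G S ∧ S.ncard = n}

/-- The semitotal domination number `γ_t2(G)`. -/
noncomputable def semitotalDominationNumber {V : Type} (G : SimpleGraph V) : ℕ :=
  sInf {n | ∃ S : Set V, IsSemitotalDominatingSet G S ∧ S.ncard = n}

/-- A leaf: a vertex of degree one. -/
def IsLeaf {V : Type} (G : SimpleGraph V) (v : V) : Prop :=
  (G.neighborSet v).ncard = 1

/-- A support vertex: a vertex adjacent to a leaf. -/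
def IsSupport {V : Type} (G : SimpleGraph V) (v : V) : Prop :=
  ∃ u, G.Adj v u ∧ IsLeaf G u

/-- A star: a graph isomorphic to `K_{1,m}` for some `m ≥ 1`. -/
def IsStar {V : Type} (G : SimpleGraph V) : Prop :=
  ∃ m : ℕ, 1 ≤ m ∧ Nonempty (G ≃g completeBipartiteGraph Unit (Fin m))

/-- The graph obtained from the disjoint union of `G` and `H` by adding
the single edge joining `v : V` to `w : W`. -/
def attach {V W : Type} (G : SimpleGraph V) (H : SimpleGraph W) (v : V) (w : W) :
    SimpleGraph (V ⊕ W) where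
  Adj x y :=
    match x, y with
    | Sum.inl a, Sum.inl b => G.Adj a b
    | Sum.inr a, Sum.inr b => H.Adj a b
    | Sum.inl a, Sum.inr b => a = v ∧ b = w
    | Sum.inr a, Sum.inl b => b = v ∧ a = w
  symm := by
    constructor
    rintro (a | a) (b | b) h
    · exact G.adj_symm h
    · exact ⟨h.1, h.2⟩
    · exact ⟨h.1, h.2⟩
    · exact H.adj_symm h
  loopless := by
    constructor
    rintro (a | a) h
    · exact G.ne_of_adj h rfl
    · exact H.ne_of_adj h rfl

/-- The statuses used to label the vertices of trees in the family `𝒯`. -/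
inductive Label : Type
  | A | B | C
deriving DecidableEq

/-- The labeling of the path `P₅` assigning `A` to the two support vertices,
`C` to the two leaves and `B` to the center. -/
def pathLabel : Fin 5 → Label
  | 0 => Label.C
  | 1 => Label.A
  | 2 => Label.B
  | 3 => Label.A
  | 4 => Label.C

/-- The family `𝒯` of labeled trees: it contains the labeled path `P₅`, and is closed
under operation `𝒪₁` (attach a new leaf labeled `C` to a vertex labeled `A`), operation
`𝒪₂` (attach a labeled path `P₅` to a degree-one vertex labeled `C`), and under
isomorphism of labeled graphs. -/
inductive TFamily : ∀ {V : Type}, SimpleGraph V → (V → Label) → Prop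
  | base : TFamily (SimpleGraph.pathGraph 5) pathLabel
  | op1 {V : Type} {G : SimpleGraph V} {f : V → Label} (v : V)
      (hv : f v = Label.A) (h : TFamily G f) :
      TFamily (attach G (⊥ : SimpleGraph (Fin 1)) v 0)
        (Sum.elim f (fun _ => Label.C))
  | op2 {V : Type} {G : SimpleGraph V} {f : V → Label} (v : V)
      (hv : f v = Label.C) (hdeg : (G.neighborSet v).ncard = 1) (h : TFamily G f) :
      TFamily (attach G (SimpleGraph.pathGraph 5) v 0) (Sum.elim f pathLabel)
  | iso {V W : Type} {G : SimpleGraph V} {H : SimpleGraph W} {f : V → Label}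
      (e : G ≃g H) (h : TFamily G f) : TFamily H (fun w => f (e.symm w))

/-- The subdivided star with `t` leaves: center `none`, and for each `i : Fin t`
a path `none — some (i,0) — some (i,1)`. -/
def subdividedStar (t : ℕ) : SimpleGraph (Option (Fin t × Fin 2)) :=
  SimpleGraph.fromRel (fun x y =>
    match x, y with
    | none, some p => p.2 = 0
    | some p, some q => p.1 = q.1 ∧ p.2 = 0 ∧ q.2 = 1
    | _, _ => False)

/-- The tree `Y` with three leaves, obtained from the star `K_{1,3}` with center `0`
by subdividing exactly one edge: edges `0-1`, `0-2`, `0-3`, `3-4`.  Its leaves are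
`1`, `2`, `4`; the leaf-neighbors of the center are `1` and `2`. -/
def Ytree : SimpleGraph (Fin 5) :=
  SimpleGraph.fromRel (fun x y =>
    (x = 0 ∧ y = 1) ∨ (x = 0 ∧ y = 2) ∨ (x = 0 ∧ y = 3) ∨ (x = 3 ∧ y = 4))

/-- An almost dominating set of `G` relative to `v`: dominates every vertex except
possibly `v`. -/
def IsAlmostDominatingSet {V : Type} (G : SimpleGraph V) (v : V) (S : Set V) : Prop :=
  ∀ w, w ≠ v → w ∉ S → ∃ u ∈ S, G.Adj u w

/-- The almost domination number `γ(G; v)`. -/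
noncomputable def almostDominationNumber {V : Type} (G : SimpleGraph V) (v : V) : ℕ :=
  sInf {n | ∃ S : Set V, IsAlmostDominatingSet G v S ∧ S.ncard = n}

/-- The family `𝒪` of trees: all trees obtainable from the path `P₄` by a finite
sequence of the operations `𝒪₁`–`𝒪₄` (and taking isomorphic copies). -/
inductive OFamily : ∀ {V : Type}, SimpleGraph V → Prop
  | base : OFamily (SimpleGraph.pathGraph 4)
  | op1 {V : Type} {G : SimpleGraph V} (v : V)
      (hv : ∃ S : Set V, IsSemitotalDominatingSet G S ∧
        S.ncard = semitotalDominationNumber G ∧ v ∈ S)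
      (h : OFamily G) :
      OFamily (attach G (⊥ : SimpleGraph (Fin 1)) v 0)
  | op2short {V : Type} {G : SimpleGraph V} (v : V)
      (hv : almostDominationNumber G v = dominationNumber G) (h : OFamily G) :
      OFamily (attach G (SimpleGraph.pathGraph 2) v 0)
  | op2long {V : Type} {G : SimpleGraph V} (v : V)
      (hv : almostDominationNumber G v = dominationNumber G) (h : OFamily G) :
      OFamily (attach G (SimpleGraph.pathGraph 5) v 0)
  | op3 {V : Type} {G : SimpleGraph V} (v : V) (t : ℕ) (ht : 2 ≤ t) (h : OFamily G) :
      OFamily (attach G (subdividedStar t) v none)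
  | op4 {V : Type} {G : SimpleGraph V} (v : V) (h : OFamily G) :
      OFamily (attach G Ytree v 1)
  | iso {V W : Type} {G : SimpleGraph V} {H : SimpleGraph W}
      (e : G ≃g H) (h : OFamily G) : OFamily H

/-!
That every `B`-vertex has exactly two neighbours, both of status `A`, is an invariant of the
construction of `𝒯`: both operations glue along an edge whose ends are not of status `B`,
so no `B`-vertex gains a neighbour, and the only new `B`-vertex is the centre of a fresh
labeled `P₅`.
-/

def BVerticesHaveTwoANeighbors {V : Type} (G : SimpleGraph V) (f : V → Label) : Prop :=
  ∀ v, f v = Label.B → (G.neighborSet v).ncard = 2 ∧ ∀ u, G.Adj v u → f u = Label.A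

lemma attach_neighborSet_inl {V W : Type} (G : SimpleGraph V) (H : SimpleGraph W)
    {v x : V} (w : W) (hx : x ≠ v) :
    (attach G H v w).neighborSet (Sum.inl x) = Sum.inl '' G.neighborSet x := by
  ext (b | b) <;> simp [attach, hx]

lemma attach_neighborSet_inr {V W : Type} (G : SimpleGraph V) (H : SimpleGraph W)
    (v : V) {w y : W} (hy : y ≠ w) :
    (attach G H v w).neighborSet (Sum.inr y) = Sum.inr '' H.neighborSet y := by
  ext (b | b) <;> simp [attach, hy]

namespace BVerticesHaveTwoANeighbors

variable {V W : Type} {G : SimpleGraph V} {H : SimpleGraph W} {f : V → Label} {g : W → Label}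

lemma attach (hG : BVerticesHaveTwoANeighbors G f) (hH : BVerticesHaveTwoANeighbors H g)
    {v : V} {w : W} (hv : f v ≠ Label.B) (hw : g w ≠ Label.B) :
    BVerticesHaveTwoANeighbors (attach G H v w) (Sum.elim f g) := by
  rintro (x | y) hB
  · have hxv : x ≠ v := by rintro rfl; exact hv hB
    obtain ⟨hcard, hA⟩ := hG x hB
    refine ⟨?_, ?_⟩
    · rw [attach_neighborSet_inl G H w hxv,
        Set.ncard_image_of_injective _ Sum.inl_injective, hcard]
    · rintro (b | b) hadj
      exacts [hA b hadj, absurd hadj.1 hxv]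
  · have hyw : y ≠ w := by rintro rfl; exact hw hB
    obtain ⟨hcard, hA⟩ := hH y hB
    refine ⟨?_, ?_⟩
    · rw [attach_neighborSet_inr G H v hyw,
        Set.ncard_image_of_injective _ Sum.inr_injective, hcard]
    · rintro (b | b) hadj
      exacts [absurd hadj.2 hyw, hA b hadj]

lemma of_iso (hG : BVerticesHaveTwoANeighbors G f) (e : G ≃g H) :
    BVerticesHaveTwoANeighbors H (fun w => f (e.symm w)) := by
  intro w hB
  obtain ⟨hcard, hA⟩ := hG (e.symm w) hB
  refine ⟨?_, fun u hadj => hA _ (e.symm.map_adj_iff.mpr hadj)⟩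
  rw [← e.apply_symm_apply w, ← e.image_neighborSet,
    Set.ncard_image_of_injective _ e.injective, hcard]

end BVerticesHaveTwoANeighbors

lemma bVerticesHaveTwoANeighbors_pathGraph_five :
    BVerticesHaveTwoANeighbors (SimpleGraph.pathGraph 5) pathLabel := by
  intro v hB
  obtain rfl : v = 2 := by fin_cases v <;> simp_all [pathLabel]
  have hnbhd : (SimpleGraph.pathGraph 5).neighborSet 2 = {1, 3} := by
    ext u
    fin_cases u <;> simp [SimpleGraph.pathGraph_adj]
  refine ⟨by rw [hnbhd]; exact Set.ncard_pair (by decide), fun u hadj => ?_⟩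
  have hu : u ∈ ({1, 3} : Set (Fin 5)) := hnbhd ▸ hadj
  rcases hu with rfl | rfl <;> rfl

lemma TFamily.bVerticesHaveTwoANeighbors {V : Type} {G : SimpleGraph V} {f : V → Label}
    (h : TFamily G f) : BVerticesHaveTwoANeighbors G f := by
  induction h with
  | base => exact bVerticesHaveTwoANeighbors_pathGraph_five
  | op1 v hv _ ih =>
    exact ih.attach (fun _ hB => absurd hB (by decide)) (by simp [hv]) (by decide)
  | op2 v hv _ _ ih =>
    exact ih.attach bVerticesHaveTwoANeighbors_pathGraph_five (by simp [hv]) (by decide)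
  | iso e _ ih => exact ih.of_iso e

theorem tFamily_B_degree_two_neighbors_A_general {V : Type} (T : SimpleGraph V)
    (f : V → Label) (h : TFamily T f) :
    ∀ v : V, f v = Label.B →
      (T.neighborSet v).ncard = 2 ∧ ∀ u : V, T.Adj v u → f u = Label.A :=
  h.bVerticesHaveTwoANeighbors

/-- If `(T, S) ∈ 𝒯`, then every vertex labeled `B` has degree two
and both of its neighbors are labeled `A`. -/
theorem tFamily_B_degree_two_neighbors_A {V : Type} [Fintype V] (T : SimpleGraph V)
    (f : V → Label) (hT : T.IsTree) (h : TFamily T f) :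
    ∀ v : V, f v = Label.B →
      (T.neighborSet v).ncard = 2 ∧ ∀ u : V, T.Adj v u → f u = Label.A :=
  tFamily_B_degree_two_neighbors_A_general T f h
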